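/- arXiv:1506.07539 — 3 statements merged into one kernel-verified Lean document; each statement's English description precedes it below -/
import Mathlib

section
/- Let (M,d) be a quasi-b-geodesic metric space, i.e. there exists C>0 such that for all x,y ∈ M there is a b-chain x = x₀,…,x_m = y (with d(x_i,x_{i+1}) ≤ b) of total length ∑ d(x_i,x_{i+1}) ≤ C·d(x,y). Then there exists C₁ ≥ 1 such that for every b₁ ≥ b and all x,y ∈ M, there exists a b₁-chain x = x₀,…,x_m = y with m ≤ ⌈C₁·d(x,y)/b₁⌉. -/
/-!
Coarsen a `b`-chain greedily: walk along it and keep extending the current jump while the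
arc length it covers stays at most `b₁`. When the next step would overshoot, close the jump
and take that step as a jump of its own, so every such pair of jumps covers arc length more
than `b₁`. Hence a chain of length `L` becomes a `b₁`-chain with `n` steps, `n b₁ ≤ 2L + b₁`,
and the quasi-geodesic bound `L ≤ C d(x,y)` turns this into `n ≤ ⌈4C d(x,y)/b₁⌉`.
-/

open Finset

section

variable {M : Type*} [PseudoMetricSpace M]

def HasChain (b : ℝ) (x y : M) (n : ℕ) : Prop :=
  ∃ c : ℕ → M, c 0 = x ∧ c n = y ∧ ∀ i < n, dist (c i) (c (i + 1)) ≤ b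

theorem HasChain.cons {b : ℝ} {x y z : M} {n : ℕ} (hxy : dist x y ≤ b)
    (h : HasChain b y z n) : HasChain b x z (n + 1) := by
  obtain ⟨c, rfl, rfl, hc⟩ := h
  refine ⟨fun i => Nat.casesOn i x c, rfl, rfl, fun i hi => ?_⟩
  cases i with
  | zero => exact hxy
  | succ i => exact hc i (by omega)

theorem hasChain_one {b : ℝ} {x y : M} (h : dist x y ≤ b) : HasChain b x y 1 :=
  ⟨fun i => if i = 0 then x else y, rfl, rfl, by simpa using h⟩

/-- The walk along `c` starts with an open jump from `p` that has already used up arc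
length `a`. -/
theorem exists_hasChain_mul_le_of_open_jump {b₁ : ℝ} (m : ℕ) :
    ∀ (c : ℕ → M) (p : M) (a : ℝ), dist p (c 0) ≤ a → a ≤ b₁ →
      (∀ i < m, dist (c i) (c (i + 1)) ≤ b₁) →
      ∃ n : ℕ, HasChain b₁ p (c m) n ∧
        n * b₁ ≤ 2 * (a + ∑ i ∈ range m, dist (c i) (c (i + 1))) + b₁ := by
  induction m with
  | zero =>
    intro c p a hpa hab _
    exact ⟨1, hasChain_one (hpa.trans hab), by
      have ha : 0 ≤ a := dist_nonneg.trans hpa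
      simp only [range_zero, sum_empty]; push_cast; linarith⟩
  | succ m ih =>
    intro c p a hpa hab hc
    have hc' : ∀ i < m, dist (c (i + 1)) (c (i + 1 + 1)) ≤ b₁ :=
      fun i hi => hc (i + 1) (by omega)
    rw [sum_range_succ']
    set d := dist (c 0) (c 1)
    by_cases hext : a + d ≤ b₁
    · obtain ⟨n, hn, hcount⟩ := ih (fun i => c (i + 1)) p (a + d)
        ((dist_triangle _ _ _).trans (by gcongr)) hext hc'
      exact ⟨n, hn, by linarith⟩
    · obtain ⟨n, hn, hcount⟩ := ih (fun i => c (i + 1)) (c 1) 0 (by simp)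
        (dist_nonneg.trans (hc 0 (by omega))) hc'
      refine ⟨n + 1 + 1, (hn.cons (hc 0 (by omega))).cons (hpa.trans hab), ?_⟩
      push_cast
      linarith

theorem exists_hasChain_mul_le {b₁ : ℝ} (hb₁ : 0 ≤ b₁) {m : ℕ} {c : ℕ → M}
    (hc : ∀ i < m, dist (c i) (c (i + 1)) ≤ b₁) :
    ∃ n : ℕ, HasChain b₁ (c 0) (c m) n ∧
      n * b₁ ≤ 2 * ∑ i ∈ range m, dist (c i) (c (i + 1)) + b₁ := by
  simpa using exists_hasChain_mul_le_of_open_jump m c (c 0) 0 (by simp) hb₁ hc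

end

theorem le_ceil_four_mul_div_of_mul_le {n : ℕ} {L b : ℝ} (hL : 0 < L) (hb : 0 < b)
    (h : n * b ≤ 2 * L + b) : n ≤ ⌈4 * L / b⌉₊ := by
  rcases le_or_gt n 1 with hn | hn
  · exact hn.trans (Nat.one_le_iff_ne_zero.2 (Nat.ceil_pos.2 (by positivity)).ne')
  · have hn' : (2 : ℝ) ≤ n := by exact_mod_cast hn
    have : n * b ≤ 4 * L := by nlinarith
    exact Nat.cast_le.1 (((le_div_iff₀ hb).2 this).trans (Nat.le_ceil _))

/-- **Chain lemma.** If `(M,d)` is quasi-`b`-geodesic (there is `C > 0` such that any two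
points `x, y` are joined by a `b`-chain of total length at most `C * dist x y`), then there
exists `C₁ ≥ 1` such that for every `b₁ ≥ b` and all `x, y` there is a `b₁`-chain from `x`
to `y` with at most `⌈C₁ * dist x y / b₁⌉` steps. -/
theorem chain_lemma {M : Type*} [MetricSpace M] (b : ℝ) (hb : 0 < b)
    (hqg : ∃ C : ℝ, 0 < C ∧ ∀ x y : M, ∃ (m : ℕ) (c : ℕ → M),
      c 0 = x ∧ c m = y ∧ (∀ i < m, dist (c i) (c (i + 1)) ≤ b) ∧
      ∑ i ∈ Finset.range m, dist (c i) (c (i + 1)) ≤ C * dist x y) :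
    ∃ C₁ : ℝ, 1 ≤ C₁ ∧ ∀ b₁ : ℝ, b ≤ b₁ → ∀ x y : M, ∃ (m : ℕ) (c : ℕ → M),
      c 0 = x ∧ c m = y ∧ (∀ i < m, dist (c i) (c (i + 1)) ≤ b₁) ∧
      m ≤ ⌈C₁ * dist x y / b₁⌉₊ := by
  obtain ⟨C, -, hq⟩ := hqg
  refine ⟨max 1 (4 * C), le_max_left _ _, fun b₁ hbb x y => ?_⟩
  have hb₁ : 0 < b₁ := hb.trans_le hbb
  rcases eq_or_ne x y with rfl | hxy
  · exact ⟨0, fun _ => x, rfl, rfl, by simp, Nat.zero_le _⟩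
  obtain ⟨m, c, rfl, rfl, hstep, hlen⟩ := hq x y
  obtain ⟨n, ⟨c', hc'0, hc'n, hstep'⟩, hcount⟩ :=
    exists_hasChain_mul_le hb₁.le fun i hi => (hstep i hi).trans hbb
  have hL : 0 < ∑ i ∈ range m, dist (c i) (c (i + 1)) :=
    (dist_pos.2 hxy).trans_le (dist_le_range_sum_dist c m)
  refine ⟨n, c', hc'0, hc'n, hstep', (le_ceil_four_mul_div_of_mul_le hL hb₁ hcount).trans ?_⟩
  refine Nat.ceil_mono (div_le_div_of_nonneg_right ?_ hb₁.le)
  calc 4 * ∑ i ∈ range m, dist (c i) (c (i + 1)) ≤ 4 * C * dist (c 0) (c m) := by linarith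
    _ ≤ max 1 (4 * C) * dist (c 0) (c m) := by gcongr; exact le_max_right _ _
end

section
/- For all β > 0 and all n ∈ ℕ*, the polynomial identity z^n = ∑_{k odd, 1≤k≤n} C(n,k) β^{n−k}(z−β)^{k−1} z + ∑_{k odd, 1≤k≤n−1} C(n−1,k) β^{n−1−k}(z−β)^{k−1}(z² − 2βz) holds in ℝ[z] (with the convention (z−β)⁰ = 1). -/
/-!
Put `w = z - β`, so that `z = β + w` and `2β - z = β - w`. By the binomial theorem the odd part
of `(β + w)^m` is `(z^m - (2β - z)^m) / 2`, and dividing it by `w` gives the polynomial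
`oddPart β w m`. After multiplying by `2w` the identity becomes
`2 w z^n = z (z^n - (2β - z)^n) + z (z - 2β) (z^(n-1) - (2β - z)^(n-1))`, which is
ring arithmetic. The cancellation of `2w` is legitimate in `ℤ[β, z]`, and the identity then
specializes to every commutative ring.
-/

open Finset MvPolynomial

section OddPart

variable {R : Type*} [CommRing R]

def oddPart (β w : R) (m : ℕ) : R :=
  ∑ k ∈ (Icc 1 m).filter Odd, (m.choose k : R) * β ^ (m - k) * w ^ (k - 1)

lemma map_oddPart {S : Type*} [CommRing S] (f : R →+* S) (β w : R) (m : ℕ) :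
    f (oddPart β w m) = oddPart (f β) (f w) m := by
  simp [oddPart, map_sum]

lemma oddPart_mul_mul_two (β w : R) (m : ℕ) :
    oddPart β w m * w * 2 = (β + w) ^ m - (β - w) ^ m := by
  have hodd : (Icc 1 m).filter Odd = (range (m + 1)).filter Odd := by
    ext k
    simp only [mem_filter, mem_Icc, mem_range, Nat.odd_iff]
    omega
  rw [oddPart, hodd, sum_mul, sum_mul, add_comm β, sub_eq_neg_add β w, add_pow, add_pow,
    ← sum_sub_distrib, sum_filter]
  refine sum_congr rfl fun k _ => ?_
  rcases Nat.even_or_odd k with hk | hk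
  · rw [if_neg (Nat.not_odd_iff_even.mpr hk), hk.neg_pow, sub_self]
  · obtain ⟨j, rfl⟩ := hk
    rw [if_pos (odd_two_mul_add_one j), (odd_two_mul_add_one j).neg_pow, Nat.add_sub_cancel]
    ring

lemma pow_eq_oddPart_of_ne [IsDomain R] [NeZero (2 : R)] {β z : R} (h : z ≠ β) {n : ℕ}
    (hn : 1 ≤ n) :
    z ^ n = oddPart β (z - β) n * z + oddPart β (z - β) (n - 1) * (z ^ 2 - 2 * β * z) := by
  obtain ⟨m, rfl⟩ := Nat.exists_eq_add_of_le' hn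
  have hsucc := oddPart_mul_mul_two β (z - β) (m + 1)
  have hm := oddPart_mul_mul_two β (z - β) m
  refine mul_right_cancel₀ (mul_ne_zero (sub_ne_zero.mpr h) two_ne_zero) ?_
  simp only [Nat.add_sub_cancel] at hm ⊢
  linear_combination (-z) * hsucc + (2 * β * z - z ^ 2) * hm

lemma pow_eq_oddPart (β z : R) {n : ℕ} (hn : 1 ≤ n) :
    z ^ n = oddPart β (z - β) n * z + oddPart β (z - β) (n - 1) * (z ^ 2 - 2 * β * z) := by
  have hX : (X 1 : MvPolynomial (Fin 2) ℤ) ≠ X 0 := X_injective.ne (by decide)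
  have h := congrArg (eval₂Hom (Int.castRingHom R) ![β, z]) (pow_eq_oddPart_of_ne hX hn)
  rw [map_pow, map_add, map_mul, map_mul, map_oddPart, map_oddPart] at h
  simpa using h

end OddPart

theorem poly_identity_one_general (β : ℝ) (n : ℕ) (hn : 1 ≤ n) (z : ℝ) :
    z ^ n =
      (∑ k ∈ (Finset.Icc 1 n).filter (fun k => Odd k),
        (n.choose k : ℝ) * β ^ (n - k) * (z - β) ^ (k - 1) * z) +
      ∑ k ∈ (Finset.Icc 1 (n - 1)).filter (fun k => Odd k),
        ((n - 1).choose k : ℝ) * β ^ (n - 1 - k) * (z - β) ^ (k - 1) *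
          (z ^ 2 - 2 * β * z) := by
  rw [← sum_mul, ← sum_mul]
  exact pow_eq_oddPart β z hn

/-- The polynomial identity
`z^n = ∑_{k odd, 1≤k≤n} C(n,k) β^{n−k} (z−β)^{k−1} z
     + ∑_{k odd, 1≤k≤n−1} C(n−1,k) β^{n−1−k} (z−β)^{k−1} (z² − 2βz)`
valid for all `β > 0` and `n ≥ 1` (as an identity of real polynomial functions). -/
theorem poly_identity_one (β : ℝ) (hβ : 0 < β) (n : ℕ) (hn : 1 ≤ n) (z : ℝ) :
    z ^ n =
      (∑ k ∈ (Finset.Icc 1 n).filter (fun k => Odd k),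
        (n.choose k : ℝ) * β ^ (n - k) * (z - β) ^ (k - 1) * z) +
      ∑ k ∈ (Finset.Icc 1 (n - 1)).filter (fun k => Odd k),
        ((n - 1).choose k : ℝ) * β ^ (n - 1 - k) * (z - β) ^ (k - 1) *
          (z ^ 2 - 2 * β * z) :=
  poly_identity_one_general β n hn z
end

section
/- For all β > 0 and all n ∈ ℕ*, the identity ((1+z)/2)^n = 2^{−n} + ∑_{k odd, 1≤k≤n} C(n,k)((1+β)/2)^{n−k} 2^{−k} (z−β)^{k−1} z + ∑_{k odd, 1≤k≤n−1} s_{n,k} ((1+β)/2)^{n−1−k} 2^{−(k+1)} (z−β)^{k−1}(z² − 2βz) holds in ℝ[z], where s_{n,k} := (1+β)^{−(n−1−k)} ∑_{i=k+1}^n C(n,i) C(i−1,k) β^{i−1−k}, and moreover s_{n,k} ≥ C(n−1,k). -/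
/-- The coefficient `s_{n,k} = (1+β)^{−(n−1−k)} ∑_{i=k+1}^n C(n,i) C(i−1,k) β^{i−1−k}`. -/
noncomputable def sCoeff (β : ℝ) (n k : ℕ) : ℝ :=
  ((1 + β) ^ (n - 1 - k))⁻¹ *
    ∑ i ∈ Finset.Icc (k + 1) n, (n.choose i : ℝ) * ((i - 1).choose k : ℝ) * β ^ (i - 1 - k)

noncomputable def Tc (β : ℝ) (n k : ℕ) : ℝ :=
  ∑ i ∈ Finset.Icc (k + 1) n, (n.choose i : ℝ) * ((i - 1).choose k : ℝ) * β ^ (i - 1 - k)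

lemma vdm (β : ℝ) (n k : ℕ) :
    ∑ i ∈ Finset.Icc k n, (n.choose i : ℝ) * (i.choose k : ℝ) * β ^ (i - k)
      = (n.choose k : ℝ) * (1 + β) ^ (n - k) := by
  rcases le_or_gt k n with h | h
  · rw [← Finset.Ico_add_one_right_eq_Icc, Finset.sum_Ico_eq_sum_range]
    have h1 : n + 1 - k = (n - k) + 1 := by omega
    rw [h1, add_comm (1:ℝ) β, add_pow, Finset.mul_sum]
    apply Finset.sum_congr rfl
    intro j hj
    simp only [Finset.mem_range] at hj
    have hcm := Nat.choose_mul (n := n) (show k ≤ k + j from Nat.le_add_right _ _)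
    have hsub : k + j - k = j := by omega
    rw [hsub] at hcm
    have hc : (n.choose (k + j) : ℝ) * ((k + j).choose k : ℝ)
        = (n.choose k : ℝ) * ((n - k).choose j : ℝ) := by exact_mod_cast congrArg (Nat.cast (R := ℝ)) hcm
    rw [hsub, one_pow, mul_one]
    calc (n.choose (k+j) : ℝ) * ((k+j).choose k : ℝ) * β ^ j
        = (n.choose k : ℝ) * ((n-k).choose j : ℝ) * β ^ j := by rw [hc]
      _ = (n.choose k : ℝ) * (β ^ j * ((n-k).choose j : ℝ)) := by ring
  · rw [Finset.Icc_eq_empty (by omega), Finset.sum_empty,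
      Nat.choose_eq_zero_of_lt h]
    simp

lemma Tlem (β : ℝ) (n j : ℕ) (hj : 1 ≤ j) (hjn : j ≤ n) :
    Tc β n (j - 1) - β ^ 2 * Tc β n (j + 1)
      = (n.choose j : ℝ) * (1 + β) ^ (n - j)
        - β * (n.choose (j + 1) : ℝ) * (1 + β) ^ (n - j - 1) := by
  have h1 : Tc β n (j - 1)
      = ∑ i ∈ Finset.Icc j n, (n.choose i : ℝ) * ((i - 1).choose (j - 1) : ℝ) * β ^ (i - j) := by
    unfold Tc
    rw [show j - 1 + 1 = j by omega]
    refine Finset.sum_congr rfl fun i hi => ?_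
    simp only [Finset.mem_Icc] at hi
    rw [show i - 1 - (j - 1) = i - j by omega]
  have h2 : β ^ 2 * Tc β n (j + 1)
      = ∑ i ∈ Finset.Icc j n, (n.choose i : ℝ) * ((i - 1).choose (j + 1) : ℝ) * β ^ (i - j) := by
    unfold Tc
    rw [Finset.mul_sum]
    rw [← Finset.sum_subset (Finset.Icc_subset_Icc_left (show j ≤ j + 1 + 1 by omega))
      (fun i hi hni => ?_)]
    · refine Finset.sum_congr rfl fun i hi => ?_
      simp only [Finset.mem_Icc] at hi
      rw [show i - j = (i - 1 - (j + 1)) + 2 by omega]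
      ring
    · simp only [Finset.mem_Icc, not_and, not_le] at hi hni
      rw [Nat.choose_eq_zero_of_lt (show i - 1 < j + 1 by omega)]
      simp
  rw [h1, h2, ← Finset.sum_sub_distrib]
  have h3 : ∀ i ∈ Finset.Icc j n,
      (n.choose i : ℝ) * ((i - 1).choose (j - 1) : ℝ) * β ^ (i - j)
        - (n.choose i : ℝ) * ((i - 1).choose (j + 1) : ℝ) * β ^ (i - j)
      = (n.choose i : ℝ) * (i.choose j : ℝ) * β ^ (i - j)
        - (n.choose i : ℝ) * (i.choose (j + 1) : ℝ) * β ^ (i - j) := by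
    intro i hi
    simp only [Finset.mem_Icc] at hi
    have e1 : i.choose j = (i - 1).choose (j - 1) + (i - 1).choose j := by
      rw [show i = (i - 1) + 1 by omega, show j = (j - 1) + 1 by omega] at *
      rw [Nat.choose_succ_succ']
      congr 1 <;> omega
    have e2 : i.choose (j + 1) = (i - 1).choose j + (i - 1).choose (j + 1) := by
      rw [show i = (i - 1) + 1 by omega] at *
      rw [Nat.choose_succ_succ']
      congr 2 <;> omega
    have c1 : (i.choose j : ℝ) = ((i-1).choose (j-1) : ℝ) + ((i-1).choose j : ℝ) := by
      exact_mod_cast congrArg (Nat.cast (R := ℝ)) e1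
    have c2 : (i.choose (j+1) : ℝ) = ((i-1).choose j : ℝ) + ((i-1).choose (j+1) : ℝ) := by
      exact_mod_cast congrArg (Nat.cast (R := ℝ)) e2
    rw [c1, c2]; ring
  rw [Finset.sum_congr rfl h3, Finset.sum_sub_distrib, vdm]
  congr 1
  have h4 : ∑ i ∈ Finset.Icc j n, (n.choose i : ℝ) * (i.choose (j + 1) : ℝ) * β ^ (i - j)
      = ∑ i ∈ Finset.Icc (j + 1) n, (n.choose i : ℝ) * (i.choose (j + 1) : ℝ) * β ^ (i - j) := by
    rw [← Finset.sum_subset (Finset.Icc_subset_Icc_left (show j ≤ j + 1 by omega))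
      (fun i hi hni => ?_)]
    simp only [Finset.mem_Icc, not_and, not_le] at hi hni
    rw [Nat.choose_eq_zero_of_lt (show i < j + 1 by omega)]
    simp
  rw [h4, show n - j - 1 = n - (j + 1) by omega, mul_assoc, ← vdm β n (j + 1), Finset.mul_sum]
  refine Finset.sum_congr rfl fun i hi => ?_
  simp only [Finset.mem_Icc] at hi
  rw [show i - j = (i - (j + 1)) + 1 by omega]
  ring

lemma j0lem (β : ℝ) (n : ℕ) (hn : 1 ≤ n) :
    (1 + β) ^ n = 1 + β * (n.choose 1 : ℝ) * (1 + β) ^ (n - 1) - β ^ 2 * Tc β n 1 := by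
  have hv : β * (n.choose 1 : ℝ) * (1 + β) ^ (n - 1)
      = ∑ i ∈ Finset.Icc 1 n, (n.choose i : ℝ) * (i : ℝ) * β ^ i := by
    rw [mul_assoc, ← vdm β n 1, Finset.mul_sum]
    refine Finset.sum_congr rfl fun i hi => ?_
    simp only [Finset.mem_Icc] at hi
    rw [Nat.choose_one_right, show i = (i - 1) + 1 by omega]
    push_cast
    rw [pow_succ]
    ring
  have ht : β ^ 2 * Tc β n 1 = ∑ i ∈ Finset.Icc 1 n, (n.choose i : ℝ) * ((i : ℝ) - 1) * β ^ i := by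
    unfold Tc
    rw [Finset.mul_sum]
    rw [← Finset.sum_subset (Finset.Icc_subset_Icc_left (show 1 ≤ 1 + 1 by omega))
      (fun i hi hni => ?_)]
    · refine Finset.sum_congr rfl fun i hi => ?_
      simp only [Finset.mem_Icc] at hi
      rw [Nat.choose_one_right]
      have hβp : β ^ 2 * β ^ (i - 1 - 1) = β ^ i := by rw [← pow_add]; congr 1; omega
      have hc : ((i - 1 : ℕ) : ℝ) = (i : ℝ) - 1 := by
        rw [Nat.cast_sub (by omega)]; norm_num
      calc β ^ 2 * ((n.choose i : ℝ) * ((i - 1 : ℕ) : ℝ) * β ^ (i - 1 - 1))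
          = (n.choose i : ℝ) * ((i - 1 : ℕ) : ℝ) * (β ^ 2 * β ^ (i - 1 - 1)) := by ring
        _ = (n.choose i : ℝ) * ((i : ℝ) - 1) * β ^ i := by rw [hβp, hc]
    · simp only [Finset.mem_Icc, not_and, not_le] at hi hni
      have : i = 1 := by omega
      subst this
      simp
  have hb : (1 + β) ^ n = 1 + ∑ i ∈ Finset.Icc 1 n, (n.choose i : ℝ) * β ^ i := by
    rw [add_comm (1:ℝ) β, add_pow]
    rw [show Finset.range (n + 1) = insert 0 (Finset.Icc 1 n) by ext i; simp; omega]
    rw [Finset.sum_insert (by simp)]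
    simp only [pow_zero, one_pow, Nat.choose_zero_right, Nat.cast_one, mul_one, one_mul]
    congr 1
    exact Finset.sum_congr rfl fun i hi => mul_comm _ _
  rw [hv, ht, hb, add_sub_assoc]
  congr 1
  rw [← Finset.sum_sub_distrib]
  refine (Finset.sum_congr rfl fun i hi => ?_).symm
  ring

lemma sum_odd_shift (m : ℕ) (f : ℕ → ℝ) :
    ∑ k ∈ (Finset.Icc 1 m).filter (fun k => Odd k), f k
      = ∑ j ∈ (Finset.range m).filter (fun j => Even j), f (j + 1) := by
  refine Finset.sum_nbij' (fun k => k - 1) (fun j => j + 1) ?_ ?_ ?_ ?_ ?_ <;>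
    intro k hk <;>
    simp only [Finset.mem_filter, Finset.mem_Icc, Finset.mem_range, Nat.odd_iff,
      Nat.even_iff] at hk ⊢
  · omega
  · omega
  · omega
  · omega
  · congr 1; omega

lemma sum_odd_shift' (m : ℕ) (f : ℕ → ℝ) :
    ∑ k ∈ (Finset.Icc 1 m).filter (fun k => Odd k), f k
      = ∑ j ∈ (Finset.Icc 2 (m + 1)).filter (fun j => Even j), f (j - 1) := by
  refine Finset.sum_nbij' (fun k => k + 1) (fun j => j - 1) ?_ ?_ ?_ ?_ ?_ <;>
    intro k hk <;>
    simp only [Finset.mem_filter, Finset.mem_Icc, Nat.odd_iff, Nat.even_iff] at hk ⊢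
  · omega
  · omega
  · omega
  · omega
  · congr 1

lemma star (β z : ℝ) (n : ℕ) (hn : 1 ≤ n) :
    (1 + z) ^ n = 1 +
      (∑ k ∈ (Finset.Icc 1 n).filter (fun k => Odd k),
        (n.choose k : ℝ) * (1 + β) ^ (n - k) * (z - β) ^ (k - 1) * z) +
      ∑ k ∈ (Finset.Icc 1 (n - 1)).filter (fun k => Odd k),
        Tc β n k * (z - β) ^ (k - 1) * (z ^ 2 - 2 * β * z) := by
  -- split first sum
  have hsum1 : ∑ k ∈ (Finset.Icc 1 n).filter (fun k => Odd k),
      (n.choose k : ℝ) * (1 + β) ^ (n - k) * (z - β) ^ (k - 1) * z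
      = (∑ k ∈ (Finset.Icc 1 n).filter (fun k => Odd k),
          (n.choose k : ℝ) * (1 + β) ^ (n - k) * (z - β) ^ k)
        + ∑ k ∈ (Finset.Icc 1 n).filter (fun k => Odd k),
          β * ((n.choose k : ℝ) * (1 + β) ^ (n - k) * (z - β) ^ (k - 1)) := by
    rw [← Finset.sum_add_distrib]
    refine Finset.sum_congr rfl fun k hk => ?_
    simp only [Finset.mem_filter, Finset.mem_Icc] at hk
    have hp : (z - β) ^ (k - 1) * (z - β) = (z - β) ^ k := by
      rw [← pow_succ]; congr 1; omega
    linear_combination ((n.choose k : ℝ) * (1 + β) ^ (n - k)) * hp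
  -- split second sum
  have hsum2 : ∑ k ∈ (Finset.Icc 1 (n - 1)).filter (fun k => Odd k),
      Tc β n k * (z - β) ^ (k - 1) * (z ^ 2 - 2 * β * z)
      = (∑ k ∈ (Finset.Icc 1 (n - 1)).filter (fun k => Odd k),
          Tc β n k * (z - β) ^ (k + 1))
        - ∑ k ∈ (Finset.Icc 1 (n - 1)).filter (fun k => Odd k),
          β ^ 2 * (Tc β n k * (z - β) ^ (k - 1)) := by
    rw [← Finset.sum_sub_distrib]
    refine Finset.sum_congr rfl fun k hk => ?_
    simp only [Finset.mem_filter, Finset.mem_Icc] at hk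
    have hp : (z - β) ^ (k - 1) * (z - β) ^ 2 = (z - β) ^ (k + 1) := by
      rw [← pow_add]; congr 1; omega
    linear_combination (Tc β n k) * hp
  rw [hsum1, hsum2]
  -- expand LHS
  rw [show (1 : ℝ) + z = (z - β) + (1 + β) by ring, add_pow]
  rw [← Finset.sum_filter_add_sum_filter_not (Finset.range (n + 1)) (fun k => Odd k)]
  have hset1 : (Finset.range (n + 1)).filter (fun k => Odd k)
      = (Finset.Icc 1 n).filter (fun k => Odd k) := by
    ext k; simp only [Finset.mem_filter, Finset.mem_range, Finset.mem_Icc, Nat.odd_iff]; omega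
  rw [hset1]
  have hodd : ∑ k ∈ (Finset.Icc 1 n).filter (fun k => Odd k),
      (z - β) ^ k * (1 + β) ^ (n - k) * (n.choose k : ℝ)
      = ∑ k ∈ (Finset.Icc 1 n).filter (fun k => Odd k),
        (n.choose k : ℝ) * (1 + β) ^ (n - k) * (z - β) ^ k :=
    Finset.sum_congr rfl fun k _ => by ring
  rw [hodd]
  -- reindex A2, A3, A4
  rw [sum_odd_shift n (fun k => β * ((n.choose k : ℝ) * (1 + β) ^ (n - k) * (z - β) ^ (k - 1)))]
  rw [sum_odd_shift (n - 1) (fun k => β ^ 2 * (Tc β n k * (z - β) ^ (k - 1)))]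
  rw [sum_odd_shift' (n - 1) (fun k => Tc β n k * (z - β) ^ (k + 1))]
  rw [show n - 1 + 1 = n by omega]
  simp only [Nat.add_sub_cancel]
  -- extend A2 over filter Even (range (n+1))
  have hE2 : ∑ j ∈ (Finset.range n).filter (fun j => Even j),
      β * ((n.choose (j + 1) : ℝ) * (1 + β) ^ (n - (j + 1)) * (z - β) ^ j)
      = ∑ j ∈ (Finset.range (n + 1)).filter (fun j => Even j),
      β * ((n.choose (j + 1) : ℝ) * (1 + β) ^ (n - (j + 1)) * (z - β) ^ j) := by
    refine Finset.sum_subset (Finset.filter_subset_filter _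
      (Finset.range_subset_range.2 (by omega))) fun j hj hnj => ?_
    simp only [Finset.mem_filter, Finset.mem_range, Nat.even_iff] at hj hnj
    rw [Nat.choose_eq_zero_of_lt (by omega)]
    simp
  have hE4 : ∑ j ∈ (Finset.range (n - 1)).filter (fun j => Even j),
      β ^ 2 * (Tc β n (j + 1) * (z - β) ^ j)
      = ∑ j ∈ (Finset.range (n + 1)).filter (fun j => Even j),
      β ^ 2 * (Tc β n (j + 1) * (z - β) ^ j) := by
    refine Finset.sum_subset (Finset.filter_subset_filter _
      (Finset.range_subset_range.2 (by omega))) fun j hj hnj => ?_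
    simp only [Finset.mem_filter, Finset.mem_range, Nat.even_iff] at hj hnj
    rw [show Tc β n (j + 1) = 0 from by
      unfold Tc; rw [Finset.Icc_eq_empty (by omega), Finset.sum_empty]]
    ring
  rw [hE2, hE4]
  -- split off j = 0
  have hins : (Finset.range (n + 1)).filter (fun j => Even j)
      = insert 0 ((Finset.Icc 2 n).filter (fun j => Even j)) := by
    ext j
    simp only [Finset.mem_filter, Finset.mem_range, Finset.mem_insert, Finset.mem_Icc,
      Nat.even_iff]
    omega
  have h0notin : (0 : ℕ) ∉ (Finset.Icc 2 n).filter (fun j => Even j) := by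
    simp
  rw [hins, Finset.sum_insert h0notin, Finset.sum_insert h0notin]
  -- not-odd = even on the remaining LHS sum
  have hset2 : Finset.filter (fun k => ¬ Odd k) (Finset.range (n + 1))
      = insert 0 ((Finset.Icc 2 n).filter (fun j => Even j)) := by
    rw [← hins]
    ext j
    simp only [Finset.mem_filter, Finset.mem_range, Nat.not_odd_iff_even]
  rw [hset2, Finset.sum_insert h0notin]
  -- now combine per-j over S = filter Even (Icc 2 n)
  have hkey : ∑ j ∈ (Finset.Icc 2 n).filter (fun j => Even j),
      (z - β) ^ j * (1 + β) ^ (n - j) * (n.choose j : ℝ)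
      = (∑ j ∈ (Finset.Icc 2 n).filter (fun j => Even j),
          β * ((n.choose (j + 1) : ℝ) * (1 + β) ^ (n - (j + 1)) * (z - β) ^ j))
        + (∑ j ∈ (Finset.Icc 2 n).filter (fun j => Even j),
            Tc β n (j - 1) * (z - β) ^ (j - 1 + 1))
        - ∑ j ∈ (Finset.Icc 2 n).filter (fun j => Even j),
            β ^ 2 * (Tc β n (j + 1) * (z - β) ^ j) := by
    rw [← Finset.sum_add_distrib, ← Finset.sum_sub_distrib]
    refine Finset.sum_congr rfl fun j hj => ?_
    simp only [Finset.mem_filter, Finset.mem_Icc] at hj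
    have hT := Tlem β n j (by omega) (by omega)
    rw [show j - 1 + 1 = j by omega, show n - (j + 1) = n - j - 1 by omega]
    linear_combination (-(z - β) ^ j) * hT
  have hj0 := j0lem β n hn
  simp only [pow_zero, Nat.sub_zero, mul_one, one_mul, Nat.choose_zero_right, Nat.cast_one,
    zero_add, Nat.choose_one_right] at *
  linarith [hkey, hj0]

lemma sIneq (β : ℝ) (hβ : 0 < β) (n : ℕ) (hn : 1 ≤ n) (k : ℕ) (hk1 : 1 ≤ k)
    (hk2 : k ≤ n - 1) : ((n - 1).choose k : ℝ) ≤ sCoeff β n k := by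
  have ha : (0 : ℝ) < (1 + β) ^ (n - 1 - k) := by positivity
  unfold sCoeff
  rw [inv_mul_eq_div, le_div_iff₀ ha]
  have hIcc : Finset.Icc (k + 1) n = Finset.Ico (k + 1) (n + 1) := by
    rw [Finset.Ico_add_one_right_eq_Icc]
  rw [hIcc, Finset.sum_Ico_eq_sum_range, show n + 1 - (k + 1) = (n - 1 - k) + 1 by omega]
  rw [add_comm (1 : ℝ) β, add_pow, Finset.mul_sum]
  refine Finset.sum_le_sum fun j hj => ?_
  simp only [Finset.mem_range] at hj
  have hjm : j ≤ n - 1 - k := by omega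
  -- the Nat inequality
  have hnat : (n - 1).choose k * ((n - 1 - k).choose j) ≤ n.choose (k + 1 + j) * ((k + j).choose k) := by
    have e1 : n.choose (k + j + 1) * (k + j + 1) = n * (n - 1).choose (k + j) := by
      have := Nat.add_one_mul_choose_eq (n - 1) (k + j)
      rw [show n - 1 + 1 = n by omega] at this
      simp -failIfUnchanged only [Nat.succ_eq_add_one] at this
      omega
    have e2 : (n - 1).choose (k + j) * ((k + j).choose k) = (n - 1).choose k * ((n - 1 - k).choose j) := by
      have := Nat.choose_mul (n := n - 1) (show k ≤ k + j from Nat.le_add_right _ _)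
      rwa [show k + j - k = j by omega] at this
    refine Nat.le_of_mul_le_mul_right ?_ (show 0 < k + j + 1 by omega)
    calc (n - 1).choose k * ((n - 1 - k).choose j) * (k + j + 1)
        ≤ (n - 1).choose k * ((n - 1 - k).choose j) * n := by
          exact Nat.mul_le_mul_left _ (by omega)
      _ = n.choose (k + j + 1) * (k + j + 1) * ((k + j).choose k) := by
          rw [e1, ← e2]; ring
      _ = n.choose (k + 1 + j) * ((k + j).choose k) * (k + j + 1) := by
          rw [show k + 1 + j = k + j + 1 by omega]; ring
  have hcast : ((n - 1).choose k : ℝ) * (((n - 1 - k).choose j : ℕ) : ℝ)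
      ≤ (n.choose (k + 1 + j) : ℝ) * (((k + j).choose k : ℕ) : ℝ) := by exact_mod_cast hnat
  calc ((n - 1).choose k : ℝ) * (β ^ j * 1 ^ (n - 1 - k - j) * ((n - 1 - k).choose j : ℝ))
      = ((n - 1).choose k : ℝ) * ((n - 1 - k).choose j : ℝ) * β ^ j := by rw [one_pow]; ring
    _ ≤ (n.choose (k + 1 + j) : ℝ) * ((k + j).choose k : ℝ) * β ^ j :=
        mul_le_mul_of_nonneg_right hcast (pow_nonneg hβ.le j)
    _ = (n.choose (k + 1 + j) : ℝ) * (((k + 1 + j) - 1).choose k : ℝ) * β ^ ((k + 1 + j) - 1 - k) := by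
        rw [show k + 1 + j - 1 = k + j by omega, show k + j - k = j by omega]

/-- The polynomial identity
`((1+z)/2)^n = 2^{−n}
  + ∑_{k odd, 1≤k≤n} C(n,k) ((1+β)/2)^{n−k} 2^{−k} (z−β)^{k−1} z
  + ∑_{k odd, 1≤k≤n−1} s_{n,k} ((1+β)/2)^{n−1−k} 2^{−(k+1)} (z−β)^{k−1} (z² − 2βz)`
for all `β > 0`, `n ≥ 1`, together with the bound `s_{n,k} ≥ C(n−1,k)`. -/

theorem poly_identity_two (β : ℝ) (hβ : 0 < β) (n : ℕ) (hn : 1 ≤ n) :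
    (∀ z : ℝ, ((1 + z) / 2) ^ n =
      (2 : ℝ)⁻¹ ^ n +
      (∑ k ∈ (Finset.Icc 1 n).filter (fun k => Odd k),
        (n.choose k : ℝ) * ((1 + β) / 2) ^ (n - k) * (2 : ℝ)⁻¹ ^ k *
          (z - β) ^ (k - 1) * z) +
      ∑ k ∈ (Finset.Icc 1 (n - 1)).filter (fun k => Odd k),
        sCoeff β n k * ((1 + β) / 2) ^ (n - 1 - k) * (2 : ℝ)⁻¹ ^ (k + 1) *
          (z - β) ^ (k - 1) * (z ^ 2 - 2 * β * z)) ∧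
    ∀ k : ℕ, 1 ≤ k → k ≤ n - 1 → ((n - 1).choose k : ℝ) ≤ sCoeff β n k := by
  constructor
  · intro z
    have hstar := star β z n hn
    have ha : (1 + β) ≠ 0 := by linarith
    calc ((1 + z) / 2) ^ n = (1 + z) ^ n * (2 : ℝ)⁻¹ ^ n := by
          rw [div_eq_mul_inv, mul_pow]
      _ = (1 +
            (∑ k ∈ (Finset.Icc 1 n).filter (fun k => Odd k),
              (n.choose k : ℝ) * (1 + β) ^ (n - k) * (z - β) ^ (k - 1) * z) +
            ∑ k ∈ (Finset.Icc 1 (n - 1)).filter (fun k => Odd k),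
              Tc β n k * (z - β) ^ (k - 1) * (z ^ 2 - 2 * β * z)) * (2 : ℝ)⁻¹ ^ n := by
          rw [hstar]
      _ = _ := by
          rw [add_mul, add_mul, one_mul, Finset.sum_mul, Finset.sum_mul]
          congr 1
          · congr 1
            refine Finset.sum_congr rfl fun k hk => ?_
            simp only [Finset.mem_filter, Finset.mem_Icc] at hk
            have hpow : (2 : ℝ)⁻¹ ^ (n - k) * (2 : ℝ)⁻¹ ^ k = (2 : ℝ)⁻¹ ^ n := by
              rw [← pow_add]; congr 1; omega
            rw [div_eq_mul_inv, mul_pow]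
            linear_combination (-((n.choose k : ℝ) * (1 + β) ^ (n - k) * (z - β) ^ (k - 1) * z)) * hpow
          · refine Finset.sum_congr rfl fun k hk => ?_
            simp only [Finset.mem_filter, Finset.mem_Icc] at hk
            have hsc : sCoeff β n k = ((1 + β) ^ (n - 1 - k))⁻¹ * Tc β n k := rfl
            have hpow : (2 : ℝ)⁻¹ ^ (n - 1 - k) * (2 : ℝ)⁻¹ ^ (k + 1) = (2 : ℝ)⁻¹ ^ n := by
              rw [← pow_add]; congr 1; omega
            have hane : ((1 + β) ^ (n - 1 - k)) ≠ 0 := pow_ne_zero _ ha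
            have hcan : ((1 + β) ^ (n - 1 - k))⁻¹ * (1 + β) ^ (n - 1 - k) = 1 :=
              inv_mul_cancel₀ hane
            rw [hsc, div_eq_mul_inv, mul_pow]
            linear_combination
              (-(Tc β n k * (z - β) ^ (k - 1) * (z ^ 2 - 2 * β * z))) * hpow +
              (-(Tc β n k * (z - β) ^ (k - 1) * (z ^ 2 - 2 * β * z) *
                (2 : ℝ)⁻¹ ^ (n - 1 - k) * (2 : ℝ)⁻¹ ^ (k + 1))) * hcan
  · exact fun k hk1 hk2 => sIneq β hβ n hn k hk1 hk2
end
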